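/- arXiv:2208.14287 — 4 statements merged into one kernel-verified Lean document; each statement's English description precedes it below -/
import Mathlib

section
/- Let F be a finite field of characteristic p and let e be a positive integer. Let P ∈ F[x] be an irreducible polynomial dividing xᵉ − 1 such that the order of P is strictly less than e. Then there exists an integer a > 1 such that the order of Pᵃ equals e if and only if e / ord(P) is a positive power of p (i.e., p is the only prime divisor of e / ord(P)). -/
open Polynomial

/-- The order of a polynomial `g` over a field: the least positive integer `d`
such that `g` divides `X ^ d - 1` (and `0` if no such `d` exists). -/
noncomputable def polyOrd {F : Type*} [Field F] (g : F[X]) : ℕ :=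
  sInf {d : ℕ | 0 < d ∧ g ∣ X ^ d - 1}

private lemma pow_dvd_pow_iff_of_squarefree' {R : Type*} [CommRing R] [IsDomain R] {P Q : R}
    (hP : Prime P) (hQ : Squarefree Q) (hPQ : P ∣ Q) {a k : ℕ} :
    P ^ a ∣ Q ^ k ↔ a ≤ k := by
  constructor
  · intro h
    by_contra hak
    push_neg at hak
    obtain ⟨R', hR'⟩ := hPQ
    have hPR' : ¬ P ∣ R' := by
      intro hd
      obtain ⟨S, hS⟩ := hd
      have : IsUnit P := hQ P ⟨S, by rw [hR', hS]; ring⟩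
      exact hP.not_unit this
    have h1 : P ^ k * P ∣ P ^ k * R' ^ k := by
      calc P ^ k * P = P ^ (k + 1) := by ring
        _ ∣ P ^ a := pow_dvd_pow P hak
        _ ∣ Q ^ k := h
        _ = P ^ k * R' ^ k := by rw [hR', mul_pow]
    have h2 : P ∣ R' ^ k := (mul_dvd_mul_iff_left (pow_ne_zero k hP.ne_zero)).mp h1
    exact hPR' (hP.dvd_of_dvd_pow h2)
  · intro h
    exact (pow_dvd_pow P h).trans (pow_dvd_pow_of_dvd hPQ k)

theorem exists_pow_order_eq_iff {F : Type*} [Field F] [Fintype F] (p : ℕ) [Fact p.Prime]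
    [CharP F p] (e : ℕ) (he : 0 < e) (P : F[X]) (hP : Irreducible P)
    (hdvd : P ∣ X ^ e - 1) (hlt : polyOrd P < e) :
    (∃ a : ℕ, 1 < a ∧ polyOrd (P ^ a) = e) ↔ ∃ t : ℕ, 1 ≤ t ∧ e / polyOrd P = p ^ t := by
  have hp : p.Prime := Fact.out
  haveI : Fact (Irreducible P) := ⟨hP⟩
  set x := AdjoinRoot.root P with hxdef
  have hiff : ∀ n : ℕ, P ∣ X ^ n - 1 ↔ x ^ n = 1 := by
    intro n
    rw [← AdjoinRoot.mk_eq_zero]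
    simp [sub_eq_zero, hxdef]
  have hxe : x ^ e = 1 := (hiff e).mp hdvd
  have hfin : IsOfFinOrder x := isOfFinOrder_iff_pow_eq_one.mpr ⟨e, he, hxe⟩
  set d := orderOf x with hddef
  have hd0 : 0 < d := hfin.orderOf_pos
  have hdvd_iff : ∀ n : ℕ, P ∣ X ^ n - 1 ↔ d ∣ n := fun n =>
    (hiff n).trans orderOf_dvd_iff_pow_eq_one.symm
  have hpolyP : polyOrd P = d := by
    unfold polyOrd
    apply le_antisymm
    · exact Nat.sInf_le ⟨hd0, (hdvd_iff d).mpr dvd_rfl⟩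
    · exact le_csInf ⟨e, he, hdvd⟩ fun n hn => Nat.le_of_dvd hn.1 ((hdvd_iff n).mp hn.2)
  haveI : CharP (AdjoinRoot P) p :=
    charP_of_injective_algebraMap (algebraMap F (AdjoinRoot P)).injective p
  have hpd : ¬ p ∣ d := by
    intro hpdvd
    obtain ⟨m, hm⟩ := hpdvd
    have hm0 : 0 < m := by
      rcases Nat.eq_zero_or_pos m with h | h
      · simp [h] at hm; omega
      · exact h
    have h1 : (x ^ m) ^ p = 1 := by rw [← pow_mul, mul_comm, ← hm, pow_orderOf_eq_one]
    have h2 : (x ^ m - 1) ^ p = 0 := by rw [sub_pow_char, h1, one_pow, sub_self]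
    have h3 : x ^ m = 1 := by
      have := pow_eq_zero_iff (n := p) hp.ne_zero |>.mp h2
      rwa [sub_eq_zero] at this
    have h4 : d ≤ m := Nat.le_of_dvd hm0 (orderOf_dvd_iff_pow_eq_one.mpr h3)
    have : m < d := by
      calc m < 2 * m := by omega
        _ ≤ p * m := Nat.mul_le_mul_right m hp.two_le
        _ = d := hm.symm
    omega
  have hcop : ∀ s : ℕ, Nat.Coprime d (p ^ s) := fun s =>
    (((Nat.Prime.coprime_iff_not_dvd hp).mpr hpd).pow_left s).symm
  -- key characterization of divisibility by powers of P
  have hkey : ∀ a n : ℕ, 1 ≤ a → 0 < n →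
      (P ^ a ∣ X ^ n - 1 ↔ d ∣ n ∧ a ≤ p ^ n.factorization p) := by
    intro a n ha hn
    set s := n.factorization p with hs
    set m := n / p ^ s with hmdef
    have hnm : p ^ s * m = n := Nat.ordProj_mul_ordCompl_eq_self n p
    have hpm : ¬ p ∣ m := Nat.not_dvd_ordCompl hp hn.ne'
    have hm0 : 0 < m := by
      rcases Nat.eq_zero_or_pos m with h | h
      · rw [h, mul_zero] at hnm; omega
      · exact h
    have hXn : (X : F[X]) ^ n - 1 = ((X : F[X]) ^ m - 1) ^ p ^ s := by
      have h := sub_pow_char_pow (R := F[X]) (X ^ m) 1 (p := p) (n := s)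
      rw [h, one_pow, ← pow_mul, mul_comm m (p ^ s), hnm]
    have hsq : Squarefree ((X : F[X]) ^ m - 1) := by
      have hm1 : (m : F) ≠ 0 := fun h => hpm ((CharP.cast_eq_zero_iff F p m).mp h)
      have := Polynomial.separable_X_pow_sub_C (1 : F) hm1 one_ne_zero
      simpa using this.squarefree
    have hdn_iff : d ∣ n ↔ d ∣ m := by
      constructor
      · intro h
        exact (hcop s).dvd_of_dvd_mul_left (by rwa [hnm])
      · intro h
        exact h.trans ⟨p ^ s, by rw [← hnm]; ring⟩
    rw [hXn]
    by_cases hPm : P ∣ (X : F[X]) ^ m - 1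
    · rw [pow_dvd_pow_iff_of_squarefree' hP.prime hsq hPm]
      have hdm : d ∣ m := (hdvd_iff m).mp hPm
      simp [hdn_iff, hdm]
    · constructor
      · intro h
        exact absurd (hP.prime.dvd_of_dvd_pow
          ((dvd_pow_self P (by omega : a ≠ 0)).trans h)) hPm
      · rintro ⟨h1, -⟩
        exact absurd ((hdvd_iff m).mpr (hdn_iff.mp h1)) hPm
  rw [hpolyP] at hlt ⊢
  have hde : d ∣ e := (hdvd_iff e).mp hdvd
  constructor
  · rintro ⟨a, ha, hord⟩
    have ha1 : 1 ≤ a := le_of_lt ha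
    -- the set for P ^ a is nonempty
    have hfact : ∀ s : ℕ, (d * p ^ s).factorization p = s := by
      intro s
      rw [Nat.factorization_mul hd0.ne' (pow_ne_zero s hp.ne_zero), Finsupp.add_apply,
        hp.factorization_pow, Finsupp.single_eq_same,
        Nat.factorization_eq_zero_of_not_dvd hpd, zero_add]
    have hne : {n : ℕ | 0 < n ∧ P ^ a ∣ X ^ n - 1}.Nonempty := by
      refine ⟨d * p ^ a, ?_, ?_⟩
      · exact Nat.mul_pos hd0 (pow_pos hp.pos _)
      · rw [hkey a _ ha1 (Nat.mul_pos hd0 (pow_pos hp.pos _))]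
        refine ⟨Dvd.intro _ rfl, ?_⟩
        rw [hfact a]
        exact le_of_lt (Nat.lt_pow_self hp.one_lt)
    have hmem : polyOrd (P ^ a) ∈ {n : ℕ | 0 < n ∧ P ^ a ∣ X ^ n - 1} := Nat.sInf_mem hne
    rw [hord] at hmem
    obtain ⟨-, hmem2⟩ := hmem
    rw [hkey a e ha1 he] at hmem2
    obtain ⟨-, hale⟩ := hmem2
    set v := e.factorization p with hv
    have hv1 : 1 ≤ v := by
      by_contra hv0
      push_neg at hv0
      interval_cases v
      simp at hale
      omega
    -- e = d * p ^ v
    have hn0mem : d * p ^ v ∈ {n : ℕ | 0 < n ∧ P ^ a ∣ X ^ n - 1} := by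
      refine ⟨Nat.mul_pos hd0 (pow_pos hp.pos _), ?_⟩
      rw [hkey a _ ha1 (Nat.mul_pos hd0 (pow_pos hp.pos _))]
      exact ⟨Dvd.intro _ rfl, by rw [hfact v]; exact hale⟩
    have hle1 : e ≤ d * p ^ v := by
      rw [← hord]
      exact Nat.sInf_le hn0mem
    have hdvd2 : d * p ^ v ∣ e :=
      (hcop v).mul_dvd_of_dvd_of_dvd hde (Nat.ordProj_dvd e p)
    have heq : e = d * p ^ v := le_antisymm hle1 (Nat.le_of_dvd he hdvd2)
    exact ⟨v, hv1, by rw [heq, Nat.mul_div_cancel_left _ hd0]⟩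
  · rintro ⟨t, ht, hquot⟩
    have heq : e = d * p ^ t := by
      rw [← hquot, Nat.mul_div_cancel' hde]
    refine ⟨p ^ t, Nat.one_lt_pow (by omega) hp.one_lt, ?_⟩
    have ha1 : 1 ≤ p ^ t := Nat.one_le_pow t p hp.pos
    have hfacte : e.factorization p = t := by
      rw [heq, Nat.factorization_mul hd0.ne' (pow_ne_zero t hp.ne_zero), Finsupp.add_apply,
        hp.factorization_pow, Finsupp.single_eq_same,
        Nat.factorization_eq_zero_of_not_dvd hpd, zero_add]
    have hemem : e ∈ {n : ℕ | 0 < n ∧ P ^ p ^ t ∣ X ^ n - 1} := by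
      refine ⟨he, ?_⟩
      rw [hkey _ e ha1 he]
      exact ⟨hde, by rw [hfacte]⟩
    unfold polyOrd
    apply le_antisymm (Nat.sInf_le hemem)
    refine le_csInf ⟨e, hemem⟩ fun n hn => ?_
    obtain ⟨hn0, hn2⟩ := hn
    rw [hkey _ n ha1 hn0] at hn2
    obtain ⟨hdn, hpn⟩ := hn2
    have htle : t ≤ n.factorization p := (Nat.pow_le_pow_iff_right hp.one_lt).mp hpn
    have hptn : p ^ t ∣ n := (pow_dvd_pow p htle).trans (Nat.ordProj_dvd n p)
    have : e ∣ n := heq ▸ (hcop t).mul_dvd_of_dvd_of_dvd hdn hptn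
    exact Nat.le_of_dvd hn0 this
end

section
/- Let F be a finite field of characteristic p and let e be a positive integer. Write xᵉ − 1 = p₁(x)^{f₁} ··· p_r(x)^{f_r} as a product of powers of distinct monic irreducible polynomials over F. Fix an index i such that e / ord(pᵢ) = p^{tᵢ} with tᵢ ≥ 1, and let aᵢ be an integer with p^{tᵢ−1} < aᵢ ≤ p^{tᵢ}. Then for any choice of integers a_j with 0 ≤ a_j ≤ f_j for all j ≠ i, the order of the polynomial pᵢ(x)^{aᵢ} · ∏_{j≠i} p_j(x)^{a_j} equals e. -/
open Polynomial

lemma X_pow_sub_one_dvd {F : Type*} [Field F] {m d : ℕ} (h : m ∣ d) :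
    (X ^ m - 1 : F[X]) ∣ X ^ d - 1 := by
  obtain ⟨k, rfl⟩ := h
  simpa [pow_mul] using sub_dvd_pow_sub_pow (X ^ m : F[X]) 1 k

lemma polyOrd_spec {F : Type*} [Field F] {g : F[X]} {d : ℕ} (hd : 0 < d)
    (h : g ∣ X ^ d - 1) :
    0 < polyOrd g ∧ g ∣ X ^ polyOrd g - 1 ∧ polyOrd g ∣ d := by
  have hne : {n : ℕ | 0 < n ∧ g ∣ X ^ n - 1}.Nonempty := ⟨d, hd, h⟩
  obtain ⟨hm, hmd⟩ := Nat.sInf_mem hne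
  set m := polyOrd g with hmdef
  refine ⟨hm, hmd, ?_⟩
  -- show m ∣ d using division with remainder on exponents
  have hr : d % m < m := Nat.mod_lt _ hm
  by_contra hnd
  have hrpos : 0 < d % m := Nat.pos_of_ne_zero (fun h0 => hnd (Nat.dvd_of_mod_eq_zero h0))
  have hdvd2 : g ∣ (X : F[X]) ^ (m * (d / m)) - 1 :=
    dvd_trans hmd (X_pow_sub_one_dvd ⟨d / m, rfl⟩)
  have key : g ∣ (X : F[X]) ^ (d % m) - 1 := by
    have : (X : F[X]) ^ d - 1 - X ^ (d % m) * (X ^ (m * (d / m)) - 1)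
        = X ^ (d % m) - 1 := by
      have : (X : F[X]) ^ d = X ^ (d % m) * X ^ (m * (d / m)) := by
        rw [← pow_add, Nat.mod_add_div]
      rw [this]; ring
    calc g ∣ (X : F[X]) ^ d - 1 - X ^ (d % m) * (X ^ (m * (d / m)) - 1) :=
          dvd_sub h (Dvd.dvd.mul_left hdvd2 _)
      _ = X ^ (d % m) - 1 := this
  have : m ≤ d % m := Nat.sInf_le ⟨hrpos, key⟩
  omega

theorem order_prod_pow_eq {F : Type*} [Field F] [Fintype F] (p : ℕ) [Fact p.Prime]
    [CharP F p] (e : ℕ) (he : 0 < e)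
    (r : ℕ) (P : Fin r → F[X]) (f : Fin r → ℕ)
    (hmonic : ∀ j, (P j).Monic) (hirr : ∀ j, Irreducible (P j))
    (hinj : Function.Injective P) (hf : ∀ j, 1 ≤ f j)
    (hfac : X ^ e - 1 = ∏ j, P j ^ f j)
    (i : Fin r) (t : ℕ) (ht : 1 ≤ t) (hpt : e / polyOrd (P i) = p ^ t)
    (a : Fin r → ℕ) (hai₁ : p ^ (t - 1) < a i) (hai₂ : a i ≤ p ^ t)
    (haj : ∀ j, j ≠ i → a j ≤ f j) :
    polyOrd (∏ j, P j ^ a j) = e := by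
  have hp : p.Prime := Fact.out
  have hprime : ∀ j, Prime (P j) := fun j => (hirr j).prime
  -- P i divides X^e - 1
  have hPie : P i ∣ (X : F[X]) ^ e - 1 := by
    rw [hfac]
    exact dvd_trans (dvd_pow_self _ (Nat.one_le_iff_ne_zero.mp (hf i)))
      (Finset.dvd_prod_of_mem _ (Finset.mem_univ i))
  set m := polyOrd (P i) with hmdef
  obtain ⟨hm0, hPm, hmd⟩ := polyOrd_spec he hPie
  have hem : e = m * p ^ t := by
    rw [← hpt, Nat.mul_div_cancel' hmd]
  -- P i ^ (p^t) divides X^e - 1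
  have hkey : (P i) ^ p ^ t ∣ (X : F[X]) ^ e - 1 := by
    have : ((X : F[X]) ^ m - 1) ^ p ^ t = X ^ e - 1 := by
      rw [sub_pow_char_pow, ← pow_mul, one_pow, ← hem]
    rw [← this]
    exact pow_dvd_pow_of_dvd hPm _
  -- pairwise coprimality of the P j
  have hcop : ∀ j k : Fin r, j ≠ k → IsCoprime (P j) (P k) := by
    intro j k hjk
    refine (hirr j).coprime_iff_not_dvd.mpr (fun hdvd => ?_)
    exact hjk (hinj (eq_of_monic_of_associated (hmonic j) (hmonic k)
      ((hirr j).associated_of_dvd (hirr k) hdvd)))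
  -- the product divides X^e - 1
  have hdvdE : (∏ j, P j ^ a j) ∣ (X : F[X]) ^ e - 1 := by
    refine Finset.prod_dvd_of_coprime ?_ ?_
    · intro j _ k _ hjk
      exact ((hcop j k hjk).pow : IsCoprime (P j ^ a j) (P k ^ a k))
    · intro j _
      by_cases hji : j = i
      · subst hji
        exact dvd_trans (pow_dvd_pow _ hai₂) hkey
      · rw [hfac]
        exact dvd_trans (pow_dvd_pow _ (haj j hji))
          (Finset.dvd_prod_of_mem _ (Finset.mem_univ j))
  -- polyOrd of product: it's in the set
  have hne : {n : ℕ | 0 < n ∧ (∏ j, P j ^ a j) ∣ X ^ n - 1}.Nonempty := ⟨e, he, hdvdE⟩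
  obtain ⟨hd0, hddvd⟩ := Nat.sInf_mem hne
  set d := polyOrd (∏ j, P j ^ a j) with hddef
  have hle : d ≤ e := Nat.sInf_le ⟨he, hdvdE⟩
  -- now show e ≤ d
  have hge : e ≤ d := by
    obtain ⟨u, d₀, hpd₀, hdeq⟩ := Nat.exists_eq_pow_mul_and_not_dvd hd0.ne' p hp.ne_one
    have hd0' : 0 < d := hd0
    have hdeq' : d = p ^ u * d₀ := hdeq
    have hddvd' : (∏ j, P j ^ a j) ∣ (X : F[X]) ^ d - 1 := hddvd
    have hd₀0 : 0 < d₀ := by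
      rcases Nat.eq_zero_or_pos d₀ with h | h
      · subst h; rw [mul_zero] at hdeq'; omega
      · exact h
    -- X^d - 1 = (X^{d₀} - 1)^{p^u}
    have hXd : (X : F[X]) ^ d - 1 = ((X : F[X]) ^ d₀ - 1) ^ p ^ u := by
      rw [sub_pow_char_pow, ← pow_mul, one_pow, mul_comm, ← hdeq']
    have hai0 : 1 ≤ a i := lt_of_le_of_lt (Nat.zero_le _) hai₁
    have hPiai : (P i) ^ a i ∣ (X : F[X]) ^ d - 1 :=
      dvd_trans (Finset.dvd_prod_of_mem (fun j => P j ^ a j) (Finset.mem_univ i)) hddvd'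
    have hPid₀ : P i ∣ (X : F[X]) ^ d₀ - 1 := by
      refine (hprime i).dvd_of_dvd_pow (n := p ^ u) ?_
      rw [← hXd]
      exact dvd_trans (dvd_pow_self _ (Nat.one_le_iff_ne_zero.mp hai0)) hPiai
    obtain ⟨_, _, hmd₀⟩ := polyOrd_spec hd₀0 hPid₀
    -- squarefreeness of X^{d₀} - 1
    have hsep : Squarefree ((X : F[X]) ^ d₀ - 1) := by
      have hn : ((d₀ : F)) ≠ 0 := by
        rw [Ne, CharP.cast_eq_zero_iff F p d₀]; exact hpd₀
      have := Polynomial.separable_X_pow_sub_C (1 : F) hn one_ne_zero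
      rw [map_one] at this
      exact this.squarefree
    obtain ⟨Q, hQ⟩ := hPid₀
    have hPQ : ¬ P i ∣ Q := by
      intro hdvd
      obtain ⟨R, rfl⟩ := hdvd
      have : IsUnit (P i) := hsep (P i) ⟨R, by rw [hQ]; ring⟩
      exact (hirr i).not_isUnit this
    -- a i ≤ p ^ u
    have hau : a i ≤ p ^ u := by
      by_contra hlt
      push_neg at hlt
      have h1 : (P i) ^ p ^ u * P i ∣ (P i) ^ p ^ u * Q ^ p ^ u := by
        have : (P i) ^ (p ^ u + 1) ∣ (P i) ^ a i := pow_dvd_pow _ hlt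
        rw [pow_succ] at this
        refine dvd_trans (dvd_trans this hPiai) ?_
        rw [hXd, hQ, mul_pow]
      have h2 : P i ∣ Q ^ p ^ u :=
        (mul_dvd_mul_iff_left (pow_ne_zero _ (hprime i).ne_zero)).mp h1
      exact hPQ ((hprime i).dvd_of_dvd_pow h2)
    have htu : t ≤ u := by
      have : p ^ (t - 1) < p ^ u := lt_of_lt_of_le hai₁ hau
      have := (Nat.pow_lt_pow_iff_right hp.one_lt).mp this
      omega
    have hmled : m ≤ d₀ := Nat.le_of_dvd hd₀0 hmd₀
    calc e = m * p ^ t := hem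
      _ ≤ d₀ * p ^ u := Nat.mul_le_mul hmled (Nat.pow_le_pow_right hp.pos htu)
      _ = d := by rw [hdeq']; ring
  omega
end

section
/- Let K be a finite field with q elements and let F be a finite extension field of K with qᵐ elements. Let β be a generator of the multiplicative group F*, let a ≥ 0 be an integer and let δ be an integer with 2 < δ ≤ qᵐ − 1. Let g(x) ∈ K[x] be the least common multiple of the minimal polynomials over K of β^i for a ≤ i ≤ a + δ − 2. Then the order of g(x) equals qᵐ − 1; that is, the exponent of the BCH code with designed distance δ > 2 equals its length qᵐ − 1. -/
open Polynomial

theorem exponent_BCH_eq_length {K F : Type*} [Field K] [Fintype K] [DecidableEq K]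
    [Field F] [Fintype F] [Algebra K F] (q m : ℕ) (hq : Fintype.card K = q)
    (hF : Fintype.card F = q ^ m)
    (β : Fˣ) (hβ : ∀ x : Fˣ, x ∈ Subgroup.zpowers β)
    (a δ : ℕ) (hδ₁ : 2 < δ) (hδ₂ : δ ≤ q ^ m - 1)
    (g : K[X]) (hg : g = (Finset.Icc a (a + δ - 2)).lcm fun i => minpoly K ((β : F) ^ i)) :
    polyOrd g = q ^ m - 1 := by
  set n : ℕ := q ^ m - 1 with hn
  have hnpos : 0 < n := lt_of_lt_of_le (by omega) hδ₂
  haveI : DecidableEq F := Classical.decEq F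
  have hcard : Fintype.card Fˣ = n := by
    rw [Fintype.card_units, hF]
  have hordβ : orderOf β = n := by
    rw [orderOf_eq_card_of_forall_mem_zpowers hβ, Nat.card_eq_fintype_card, hcard]
  have hβn : (β : F) ^ n = 1 := by
    have h1 : β ^ n = 1 := by rw [← hordβ]; exact pow_orderOf_eq_one β
    calc (β : F) ^ n = ((β ^ n : Fˣ) : F) := by rw [Units.val_pow_eq_pow_val]
    _ = 1 := by rw [h1, Units.val_one]
  -- membership: g divides X^n - 1
  have hmem : g ∣ (X : K[X]) ^ n - 1 := by
    rw [hg]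
    apply Finset.lcm_dvd
    intro i _
    apply minpoly.dvd
    simp only [map_sub, map_pow, aeval_X, map_one]
    rw [← pow_mul, mul_comm, pow_mul, hβn, one_pow, sub_self]
  -- lower bound
  have hlb : ∀ d : ℕ, 0 < d → g ∣ (X : K[X]) ^ d - 1 → n ≤ d := by
    intro d hd hdvd
    have key : ∀ i : ℕ, i ∈ Finset.Icc a (a + δ - 2) → n ∣ i * d := by
      intro i hi
      have h1 : minpoly K ((β : F) ^ i) ∣ (X : K[X]) ^ d - 1 := by
        refine dvd_trans ?_ hdvd
        rw [hg]
        exact Finset.dvd_lcm hi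
      obtain ⟨h, hh⟩ := h1
      have h2 : ((β : F) ^ i) ^ d = 1 := by
        have h3 := congrArg (aeval ((β : F) ^ i)) hh
        rw [map_mul, minpoly.aeval, zero_mul, map_sub, map_pow, aeval_X, map_one] at h3
        have := sub_eq_zero.mp h3
        exact this
      have h4 : β ^ (i * d) = 1 := by
        apply Units.ext
        rw [Units.val_pow_eq_pow_val, Units.val_one, pow_mul]
        exact h2
      rw [← hordβ]
      exact orderOf_dvd_of_pow_eq_one h4
    have ha : a ∈ Finset.Icc a (a + δ - 2) := by
      simp only [Finset.mem_Icc]; omega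
    have ha1 : a + 1 ∈ Finset.Icc a (a + δ - 2) := by
      simp only [Finset.mem_Icc]; omega
    have d1 := key a ha
    have d2 := key (a + 1) ha1
    have : n ∣ d := by
      have : (a + 1) * d = a * d + d := by ring
      rw [this] at d2
      exact (Nat.dvd_add_right d1).mp d2
    exact Nat.le_of_dvd hd this
  have hne : ({d : ℕ | 0 < d ∧ g ∣ X ^ d - 1}).Nonempty := ⟨n, hnpos, hmem⟩
  refine le_antisymm (Nat.sInf_le ⟨hnpos, hmem⟩) (le_csInf hne ?_)
  rintro d ⟨hd, hdvd⟩
  exact hlb d hd hdvd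
end

section
/- Let F be a finite field with q elements and let β be a generator of the multiplicative group F*. Let a ≥ 0 be an integer and let δ be an integer with 2 < δ ≤ q − 1. Let g(x) = (x − β^(a+1))(x − β^(a+2))···(x − β^(a+δ−1)) ∈ F[x]. Then the order of g(x) equals q − 1; that is, the exponent of a Reed–Solomon code over F with designed distance δ > 2 equals its length q − 1. -/
open Polynomial

theorem exponent_RS_eq_length {F : Type*} [Field F] [Fintype F] (q : ℕ)
    (hq : Fintype.card F = q)
    (β : Fˣ) (hβ : ∀ x : Fˣ, x ∈ Subgroup.zpowers β)
    (a δ : ℕ) (hδ₁ : 2 < δ) (hδ₂ : δ ≤ q - 1)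
    (g : F[X])
    (hg : g = ∏ i ∈ Finset.Icc (a + 1) (a + δ - 1), (X - C ((β : F) ^ i))) :
    polyOrd g = q - 1 := by
  classical
  set n := q - 1 with hn
  have hn3 : 3 ≤ n := le_trans hδ₁ hδ₂
  have hnpos : 0 < n := by omega
  -- order of β
  have hord : orderOf β = n := by
    rw [orderOf_eq_card_of_forall_mem_zpowers hβ, Nat.card_eq_fintype_card,
      Fintype.card_units, hq]
  have hordF : orderOf (β : F) = n := by rw [orderOf_units, hord]
  have hβn : (β : F) ^ n = 1 := by
    rw [← hordF]; exact pow_orderOf_eq_one _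
  -- membership: n ∈ S
  have hmem : 0 < n ∧ g ∣ X ^ n - 1 := by
    refine ⟨hnpos, ?_⟩
    rw [hg]
    -- each factor's root is an n-th root of unity, and roots are distinct
    have hinj : Set.InjOn (fun i => (β : F) ^ i) (Finset.Icc (a + 1) (a + δ - 1)) := by
      intro i hi j hj hij
      simp only [Finset.coe_Icc, Set.mem_Icc] at hi hj
      rcases le_total i j with h | h
      · have : (β : F) ^ i * (β : F) ^ (j - i) = (β : F) ^ i * 1 := by
          rw [mul_one, ← pow_add]
          simpa [Nat.add_sub_cancel' h] using hij.symm
        have hji : (β : F) ^ (j - i) = 1 := by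
          have hne : (β : F) ^ i ≠ 0 := pow_ne_zero _ (Units.ne_zero β)
          exact mul_left_cancel₀ hne this
        have := orderOf_dvd_of_pow_eq_one hji
        rw [hordF] at this
        have : j - i = 0 := by
          rcases Nat.eq_zero_or_pos (j - i) with h0 | h0
          · exact h0
          · exfalso
            have := Nat.le_of_dvd h0 this
            omega
        omega
      · have : (β : F) ^ j * (β : F) ^ (i - j) = (β : F) ^ j * 1 := by
          rw [mul_one, ← pow_add]
          simpa [Nat.add_sub_cancel' h] using hij
        have hji : (β : F) ^ (i - j) = 1 := by
          have hne : (β : F) ^ j ≠ 0 := pow_ne_zero _ (Units.ne_zero β)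
          exact mul_left_cancel₀ hne this
        have := orderOf_dvd_of_pow_eq_one hji
        rw [hordF] at this
        have : i - j = 0 := by
          rcases Nat.eq_zero_or_pos (i - j) with h0 | h0
          · exact h0
          · exfalso
            have := Nat.le_of_dvd h0 this
            omega
        omega
    have himg : ∏ x ∈ (Finset.Icc (a + 1) (a + δ - 1)).image (fun i => (β : F) ^ i),
        (X - C x) = ∏ i ∈ Finset.Icc (a + 1) (a + δ - 1), (X - C ((β : F) ^ i)) :=
      Finset.prod_image (fun i hi j hj => hinj hi hj)
    rw [← himg]
    have hsub : (Finset.Icc (a + 1) (a + δ - 1)).image (fun i => (β : F) ^ i)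
        ⊆ nthRootsFinset n (1 : F) := by
      intro x hx
      simp only [Finset.mem_image] at hx
      obtain ⟨i, _, rfl⟩ := hx
      rw [Polynomial.mem_nthRootsFinset hnpos, ← pow_mul, mul_comm, pow_mul, hβn, one_pow]
    have hprim : IsPrimitiveRoot (β : F) n := by
      rw [← hordF]
      exact IsPrimitiveRoot.orderOf _
    rw [Polynomial.X_pow_sub_one_eq_prod hnpos hprim]
    exact Finset.prod_dvd_prod_of_subset _ _ _ hsub
  refine le_antisymm (Nat.sInf_le hmem) (le_csInf ⟨n, hmem⟩ ?_)
  rintro d ⟨hd0, hdvd⟩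
  -- both β^(a+1) and β^(a+2) are roots of X^d - 1
  have hroot : ∀ i, i ∈ Finset.Icc (a + 1) (a + δ - 1) → ((β : F) ^ i) ^ d = 1 := by
    intro i hi
    have h1 : (X - C ((β : F) ^ i)) ∣ g := hg ▸ Finset.dvd_prod_of_mem _ hi
    have h2 : (X - C ((β : F) ^ i)) ∣ (X ^ d - 1 : F[X]) := h1.trans hdvd
    have := Polynomial.dvd_iff_isRoot.mp h2
    simpa [Polynomial.IsRoot, sub_eq_zero] using this
  have h1 : ((β : F) ^ (a + 1)) ^ d = 1 := hroot _ (by simp [Finset.mem_Icc]; omega)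
  have h2 : ((β : F) ^ (a + 2)) ^ d = 1 := hroot _ (by simp [Finset.mem_Icc]; omega)
  have h1' : (β : F) ^ ((a + 1) * d) = 1 := by rw [pow_mul]; exact h1
  have h2' : (β : F) ^ ((a + 2) * d) = 1 := by rw [pow_mul]; exact h2
  have hbd : (β : F) ^ d = 1 := by
    have key : (β : F) ^ ((a + 1) * d) * (β : F) ^ d = (β : F) ^ ((a + 2) * d) := by
      rw [← pow_add]; congr 1; ring
    rw [h1', one_mul, h2'] at key
    exact key
  have := orderOf_dvd_of_pow_eq_one hbd
  rw [hordF] at this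
  exact Nat.le_of_dvd hd0 this
end
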